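/- arXiv:1812.06898 — 7 statements merged into one kernel-verified Lean document; each statement's English description precedes it below -/
import Mathlib

section
/- Suppose flow p attains the largest completion time under the proportional allocation b*, i.e. V p / b* p = max_i V i / b* i, and suppose the minimum defining b* p is attained at the link e* ∈ E p, i.e. b* p = (V p / ∑_{k with e* ∈ E k} V k) · B e*. Then for every flow i whose route uses e* (i.e. e* ∈ E i), the minimum defining b* i is also attained at e*: b* i = (V i / ∑_{k with e* ∈ E k} V k) · B e*. -/
/-- **Lemma 1 (CoRBA paper).**
Flows indexed by a nonempty finite type `ι`, links by a finite type `ε`.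
Flow `i` has volume `V i > 0` and route `E i` (a nonempty finset of links);
link `e` has bandwidth `B e > 0`.  The proportional allocation is
`b* i = min_{e ∈ E i} (V i / ∑_{k : e ∈ E k} V k) · B e`.
If flow `p` attains the largest completion time `V p / b* p` and the minimum
defining `b* p` is attained at link `e* ∈ E p`, then for every flow `i`
using `e*`, the minimum defining `b* i` is also attained at `e*`. -/
theorem lemma1_min_attained_at_bottleneck
    {ι ε : Type*} [Fintype ι] [Nonempty ι] [Fintype ε] [DecidableEq ε]
    (V : ι → ℝ) (hV : ∀ i, 0 < V i)
    (E : ι → Finset ε) (hE : ∀ i, (E i).Nonempty)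
    (B : ε → ℝ) (hB : ∀ e, 0 < B e)
    (bstar : ι → ℝ)
    (hbstar : ∀ i, bstar i =
      (E i).inf' (hE i)
        (fun e => (V i / ∑ k ∈ Finset.univ.filter (fun k => e ∈ E k), V k) * B e))
    (p : ι)
    (hp : V p / bstar p = Finset.univ.sup' Finset.univ_nonempty (fun i => V i / bstar i))
    (estar : ε) (hestar : estar ∈ E p)
    (hmin : bstar p =
      (V p / ∑ k ∈ Finset.univ.filter (fun k => estar ∈ E k), V k) * B estar) :
    ∀ i, estar ∈ E i →
      bstar i =
        (V i / ∑ k ∈ Finset.univ.filter (fun k => estar ∈ E k), V k) * B estar := by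
  intro i hi
  set S : ε → ℝ := fun e => ∑ k ∈ Finset.univ.filter (fun k => e ∈ E k), V k with hS
  -- positivity of S e for e ∈ E j
  have hSpos : ∀ (j : ι) (e : ε), e ∈ E j → 0 < S e := by
    intro j e he
    exact Finset.sum_pos (fun k _ => hV k) ⟨j, by simp [he]⟩
  -- positivity of bstar
  have hbpos : ∀ j, 0 < bstar j := by
    intro j
    rw [hbstar j]
    rw [Finset.lt_inf'_iff]
    intro e he
    exact mul_pos (div_pos (hV j) (hSpos j e he)) (hB e)
  have hSestar : 0 < S estar := hSpos i estar hi
  -- upper bound: bstar i ≤ (V i / S estar) * B estar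
  have hle : bstar i ≤ (V i / S estar) * B estar := by
    rw [hbstar i]
    exact Finset.inf'_le _ hi
  -- V p / bstar p = S estar / B estar
  have hVp : V p / bstar p = S estar / B estar := by
    have h1 : V p ≠ 0 := (hV p).ne'
    have h2 : S estar ≠ 0 := hSestar.ne'
    have h3 : B estar ≠ 0 := (hB estar).ne'
    rw [hmin]
    field_simp
    ring
  have hmax : V i / bstar i ≤ S estar / B estar := by
    rw [← hVp, hp]
    exact Finset.le_sup' (fun j => V j / bstar j) (Finset.mem_univ i)
  -- derive lower bound
  have hge : (V i / S estar) * B estar ≤ bstar i := by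
    have h1 : V i * B estar ≤ S estar * bstar i := by
      rw [div_le_div_iff₀ (hbpos i) (hB estar)] at hmax
      linarith
    rw [div_mul_eq_mul_div, div_le_iff₀ hSestar]
    nlinarith
  linarith
end

section
/- The proportional allocation b* is an optimal solution of the OptBA problem: for every feasible bandwidth allocation b' with b' i > 0 for all flows i, the coflow completion time of b' is at least that of b*, i.e. max_i V i / b' i ≥ max_i V i / b* i. -/
/-- **Theorem 1 (CoRBA paper).**
The proportional allocation `b* i = min_{e ∈ E i} (V i / ∑_{k : e ∈ E k} V k) · B e`
is an optimal solution of the OptBA problem: every feasible bandwidth allocation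
`b'` with strictly positive entries has coflow completion time
`max_i V i / b' i` at least `max_i V i / b* i`. -/
theorem proportional_allocation_optimal
    {ι ε : Type*} [Fintype ι] [Nonempty ι] [Fintype ε] [DecidableEq ε]
    (V : ι → ℝ) (hV : ∀ i, 0 < V i)
    (E : ι → Finset ε) (hE : ∀ i, (E i).Nonempty)
    (B : ε → ℝ) (hB : ∀ e, 0 < B e)
    (bstar : ι → ℝ)
    (hbstar : ∀ i, bstar i =
      (E i).inf' (hE i)
        (fun e => (V i / ∑ k ∈ Finset.univ.filter (fun k => e ∈ E k), V k) * B e))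
    (b' : ι → ℝ) (hb'pos : ∀ i, 0 < b' i)
    (hb'feas : ∀ e, (∑ i ∈ Finset.univ.filter (fun i => e ∈ E i), b' i) ≤ B e) :
    Finset.univ.sup' Finset.univ_nonempty (fun i => V i / b' i) ≥
      Finset.univ.sup' Finset.univ_nonempty (fun i => V i / bstar i) := by
  set S : ε → ℝ := fun e => ∑ k ∈ Finset.univ.filter (fun k => e ∈ E k), V k with hS
  set T' : ℝ := Finset.univ.sup' Finset.univ_nonempty (fun i => V i / b' i) with hT'
  -- pick the flow attaining the sup for bstar
  obtain ⟨i0, -, hi0⟩ := Finset.exists_mem_eq_sup' (Finset.univ_nonempty)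
    (fun i => V i / bstar i)
  rw [ge_iff_le, hi0]
  -- pick the link attaining the inf for bstar i0
  obtain ⟨e0, he0, he0eq⟩ := Finset.exists_mem_eq_inf' (hE i0)
    (fun e => (V i0 / S e) * B e)
  have hbi0 : bstar i0 = (V i0 / S e0) * B e0 := by rw [hbstar i0, he0eq]
  have hSpos : 0 < S e0 := by
    apply Finset.sum_pos (fun k _ => hV k)
    exact ⟨i0, Finset.mem_filter.mpr ⟨Finset.mem_univ _, he0⟩⟩
  have hval : V i0 / bstar i0 = S e0 / B e0 := by
    rw [hbi0]
    have h1 := (hV i0).ne'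
    have h2 := hSpos.ne'
    have h3 := (hB e0).ne'
    field_simp
  rw [hval]
  have hT'pos : 0 < T' := lt_of_lt_of_le (div_pos (hV i0) (hb'pos i0))
    (Finset.le_sup' (fun i => V i / b' i) (Finset.mem_univ i0))
  rw [div_le_iff₀ (hB e0)]
  calc S e0 ≤ ∑ k ∈ Finset.univ.filter (fun k => e0 ∈ E k), T' * b' k := by
        apply Finset.sum_le_sum
        intro k _
        have hk : V k / b' k ≤ T' := Finset.le_sup' (fun i => V i / b' i) (Finset.mem_univ k)
        rw [div_le_iff₀ (hb'pos k)] at hk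
        exact hk
    _ = T' * ∑ k ∈ Finset.univ.filter (fun k => e0 ∈ E k), b' k := by
        rw [Finset.mul_sum]
    _ ≤ T' * B e0 := by
        exact mul_le_mul_of_nonneg_left (hb'feas e0) hT'pos.le
end

section
/- The proportional allocation b* is a feasible bandwidth allocation with strictly positive entries: b* i > 0 for every flow i, and for every link e, ∑_{i with e ∈ E i} b* i ≤ B e. -/
/-- The proportional allocation
`b* i = min_{e ∈ E i} (V i / ∑_{k : e ∈ E k} V k) · B e`
is a feasible bandwidth allocation with strictly positive entries:
`b* i > 0` for every flow `i`, and for every link `e`,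
`∑_{i : e ∈ E i} b* i ≤ B e`. -/
theorem proportional_allocation_feasible
    {ι ε : Type*} [Fintype ι] [Nonempty ι] [Fintype ε] [DecidableEq ε]
    (V : ι → ℝ) (hV : ∀ i, 0 < V i)
    (E : ι → Finset ε) (hE : ∀ i, (E i).Nonempty)
    (B : ε → ℝ) (hB : ∀ e, 0 < B e)
    (bstar : ι → ℝ)
    (hbstar : ∀ i, bstar i =
      (E i).inf' (hE i)
        (fun e => (V i / ∑ k ∈ Finset.univ.filter (fun k => e ∈ E k), V k) * B e)) :
    (∀ i, 0 < bstar i) ∧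
      (∀ e, (∑ i ∈ Finset.univ.filter (fun i => e ∈ E i), bstar i) ≤ B e) := by
  have hSpos : ∀ (e : ε) (i : ι), e ∈ E i →
      0 < ∑ k ∈ Finset.univ.filter (fun k => e ∈ E k), V k := by
    intro e i hi
    apply Finset.sum_pos
    · intro k _; exact hV k
    · exact ⟨i, Finset.mem_filter.mpr ⟨Finset.mem_univ i, hi⟩⟩
  constructor
  · intro i
    rw [hbstar i]
    apply Finset.lt_inf'_iff (hE i) |>.mpr
    intro e he
    exact mul_pos (div_pos (hV i) (hSpos e i he)) (hB e)
  · intro e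
    set S := ∑ k ∈ Finset.univ.filter (fun k => e ∈ E k), V k with hS
    by_cases hne : (Finset.univ.filter (fun i => e ∈ E i)).Nonempty
    · obtain ⟨i0, hi0⟩ := hne
      have hSpos' : 0 < S := hSpos e i0 (Finset.mem_filter.mp hi0).2
      calc ∑ i ∈ Finset.univ.filter (fun i => e ∈ E i), bstar i
          ≤ ∑ i ∈ Finset.univ.filter (fun i => e ∈ E i), (V i / S) * B e := by
            apply Finset.sum_le_sum
            intro i hi
            rw [hbstar i]
            exact Finset.inf'_le _ (Finset.mem_filter.mp hi).2
        _ = (S / S) * B e := by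
            rw [Finset.sum_div, Finset.sum_mul, hS]
        _ = B e := by rw [div_self hSpos'.ne', one_mul]
    · rw [Finset.not_nonempty_iff_eq_empty.mp hne, Finset.sum_empty]
      exact (hB e).le
end

section
/- Suppose flow p attains the largest completion time under the proportional allocation b* and the minimum defining b* p is attained at link e* ∈ E p, i.e. b* p = (V p / ∑_{k with e* ∈ E k} V k) · B e*. Then every flow using link e* finishes at the same time as flow p: for every flow i with e* ∈ E i, V i / b* i = V p / b* p. -/
/-- Suppose flow `p` attains the largest completion time under the proportional
allocation `b* i = min_{e ∈ E i} (V i / ∑_{k : e ∈ E k} V k) · B e`, and the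
minimum defining `b* p` is attained at link `e* ∈ E p`.  Then every flow using
link `e*` finishes at the same time as flow `p`:
for every `i` with `e* ∈ E i`, `V i / b* i = V p / b* p`. -/
theorem flows_on_bottleneck_finish_together
    {ι ε : Type*} [Fintype ι] [Nonempty ι] [Fintype ε] [DecidableEq ε]
    (V : ι → ℝ) (hV : ∀ i, 0 < V i)
    (E : ι → Finset ε) (hE : ∀ i, (E i).Nonempty)
    (B : ε → ℝ) (hB : ∀ e, 0 < B e)
    (bstar : ι → ℝ)
    (hbstar : ∀ i, bstar i =
      (E i).inf' (hE i)
        (fun e => (V i / ∑ k ∈ Finset.univ.filter (fun k => e ∈ E k), V k) * B e))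
    (p : ι)
    (hp : V p / bstar p = Finset.univ.sup' Finset.univ_nonempty (fun i => V i / bstar i))
    (estar : ε) (hestar : estar ∈ E p)
    (hmin : bstar p =
      (V p / ∑ k ∈ Finset.univ.filter (fun k => estar ∈ E k), V k) * B estar) :
    ∀ i, estar ∈ E i → V i / bstar i = V p / bstar p := by
  -- positivity of bstar
  have hsum_pos : ∀ (e : ε) (j : ι), e ∈ E j →
      0 < ∑ k ∈ Finset.univ.filter (fun k => e ∈ E k), V k := by
    intro e j hj
    apply Finset.sum_pos (fun k _ => hV k)
    exact ⟨j, Finset.mem_filter.mpr ⟨Finset.mem_univ j, hj⟩⟩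
  have hb_pos : ∀ j, 0 < bstar j := by
    intro j
    rw [hbstar j]
    rw [Finset.lt_inf'_iff]
    intro e he
    exact mul_pos (div_pos (hV j) (hsum_pos e j he)) (hB e)
  intro i hi
  set S := ∑ k ∈ Finset.univ.filter (fun k => estar ∈ E k), V k with hS
  have hSpos : 0 < S := hsum_pos estar i hi
  have hle : bstar i ≤ (V i / S) * B estar := by
    rw [hbstar i]
    exact Finset.inf'_le _ hi
  -- V p / bstar p = S / B estar
  have hpval : V p / bstar p = S / B estar := by
    rw [hmin]
    field_simp [(hV p).ne', hSpos.ne', (hB estar).ne']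
  -- lower bound: V i / bstar i ≥ S / B estar
  have hlow : S / B estar ≤ V i / bstar i := by
    have h1 : V i / ((V i / S) * B estar) ≤ V i / bstar i :=
      div_le_div_of_nonneg_left (hV i).le (hb_pos i) hle
    have h2 : V i / ((V i / S) * B estar) = S / B estar := by
      field_simp [(hV i).ne', hSpos.ne', (hB estar).ne']
    linarith
  have hupp : V i / bstar i ≤ V p / bstar p := by
    rw [hp]
    exact Finset.le_sup' (fun j => V j / bstar j) (Finset.mem_univ i)
  linarith [hpval ▸ hlow, hupp]
end

section
/- Suppose flow p attains the largest completion time under the proportional allocation b* and the minimum defining b* p is attained at link e* ∈ E p, i.e. b* p = (V p / ∑_{k with e* ∈ E k} V k) · B e*. Then the allocation b* saturates the link e*: ∑_{i with e* ∈ E i} b* i = B e*. -/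
/-- Suppose flow `p` attains the largest completion time under the proportional
allocation `b* i = min_{e ∈ E i} (V i / ∑_{k : e ∈ E k} V k) · B e`, and the
minimum defining `b* p` is attained at link `e* ∈ E p`.  Then the allocation
`b*` saturates the link `e*`: `∑_{i : e* ∈ E i} b* i = B e*`. -/
theorem bottleneck_link_saturated
    {ι ε : Type*} [Fintype ι] [Nonempty ι] [Fintype ε] [DecidableEq ε]
    (V : ι → ℝ) (hV : ∀ i, 0 < V i)
    (E : ι → Finset ε) (hE : ∀ i, (E i).Nonempty)
    (B : ε → ℝ) (hB : ∀ e, 0 < B e)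
    (bstar : ι → ℝ)
    (hbstar : ∀ i, bstar i =
      (E i).inf' (hE i)
        (fun e => (V i / ∑ k ∈ Finset.univ.filter (fun k => e ∈ E k), V k) * B e))
    (p : ι)
    (hp : V p / bstar p = Finset.univ.sup' Finset.univ_nonempty (fun i => V i / bstar i))
    (estar : ε) (hestar : estar ∈ E p)
    (hmin : bstar p =
      (V p / ∑ k ∈ Finset.univ.filter (fun k => estar ∈ E k), V k) * B estar) :
    (∑ i ∈ Finset.univ.filter (fun i => estar ∈ E i), bstar i) = B estar := by
  classical
  set S : ε → ℝ := fun e => ∑ k ∈ Finset.univ.filter (fun k => e ∈ E k), V k with hS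
  have hSpos : ∀ i, ∀ e ∈ E i, 0 < S e := by
    intro i e he
    apply Finset.sum_pos (fun k _ => hV k)
    exact ⟨i, Finset.mem_filter.mpr ⟨Finset.mem_univ i, he⟩⟩
  have hbpos : ∀ i, 0 < bstar i := by
    intro i
    rw [hbstar i]
    rw [Finset.lt_inf'_iff]
    intro e he
    exact mul_pos (div_pos (hV i) (hSpos i e he)) (hB e)
  -- each flow through estar gets exactly (V i / S estar) * B estar
  have hkey : ∀ i, estar ∈ E i → bstar i = (V i / S estar) * B estar := by
    intro i hi
    have hub : bstar i ≤ (V i / S estar) * B estar := by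
      rw [hbstar i]
      exact Finset.inf'_le _ hi
    have hlb : (V i / S estar) * B estar ≤ bstar i := by
      have hmax : V i / bstar i ≤ V p / bstar p := by
        rw [hp]
        exact Finset.le_sup' (fun i => V i / bstar i) (Finset.mem_univ i)
      have hppos := hbpos p
      have hipos := hbpos i
      have hSe := hSpos p estar hestar
      have hBe := hB estar
      have hVp := hV p
      have hpval : V p / bstar p = S estar / B estar := by
        rw [hmin]
        field_simp
        ring
      rw [hpval, div_le_div_iff₀ hipos hBe] at hmax
      rw [div_mul_eq_mul_div, div_le_iff₀ hSe]
      nlinarith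
    linarith
  rw [Finset.sum_congr rfl (fun i hi => hkey i (Finset.mem_filter.mp hi).2)]
  have hSe := hSpos p estar hestar
  rw [← Finset.sum_mul, ← Finset.sum_div]
  rw [show (∑ i ∈ Finset.univ.filter (fun i => estar ∈ E i), V i) = S estar from rfl]
  field_simp
end

section
/- Under the proportional allocation b*, the completion time of each flow i equals the largest congestion ratio along its route: V i / b* i = max_{e ∈ E i} (∑_{k with e ∈ E k} V k) / B e. Consequently, the coflow completion time of b* equals the maximum congestion ratio over all links used by at least one flow: max_i V i / b* i = max_{e used by some flow} (∑_{k with e ∈ E k} V k) / B e. -/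
/-- Under the proportional allocation
`b* i = min_{e ∈ E i} (V i / ∑_{k : e ∈ E k} V k) · B e`,
the completion time of each flow `i` equals the largest congestion ratio along
its route, `max_{e ∈ E i} (∑_{k : e ∈ E k} V k) / B e`; consequently the
coflow completion time of `b*` equals the maximum congestion ratio over all
links used by at least one flow. -/
theorem proportional_allocation_cct_eq_max_congestion
    {ι ε : Type*} [Fintype ι] [Nonempty ι] [Fintype ε] [DecidableEq ε]
    (V : ι → ℝ) (hV : ∀ i, 0 < V i)
    (E : ι → Finset ε) (hE : ∀ i, (E i).Nonempty)
    (B : ε → ℝ) (hB : ∀ e, 0 < B e)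
    (bstar : ι → ℝ)
    (hbstar : ∀ i, bstar i =
      (E i).inf' (hE i)
        (fun e => (V i / ∑ k ∈ Finset.univ.filter (fun k => e ∈ E k), V k) * B e)) :
    (∀ i, V i / bstar i =
        (E i).sup' (hE i)
          (fun e => (∑ k ∈ Finset.univ.filter (fun k => e ∈ E k), V k) / B e)) ∧
      Finset.univ.sup' Finset.univ_nonempty (fun i => V i / bstar i) =
        (Finset.univ.biUnion E).sup'
          (by
            obtain ⟨i⟩ := (inferInstance : Nonempty ι)
            obtain ⟨e, he⟩ := hE i
            exact ⟨e, Finset.mem_biUnion.mpr ⟨i, Finset.mem_univ i, he⟩⟩)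
          (fun e => (∑ k ∈ Finset.univ.filter (fun k => e ∈ E k), V k) / B e) := by
  set S : ε → ℝ := fun e => ∑ k ∈ Finset.univ.filter (fun k => e ∈ E k), V k with hS
  have hSpos : ∀ i, ∀ e ∈ E i, 0 < S e := by
    intro i e he
    apply Finset.sum_pos
    · intro k _; exact hV k
    · exact ⟨i, by simp [he]⟩
  have key : ∀ i, V i / bstar i = (E i).sup' (hE i) (fun e => S e / B e) := by
    intro i
    have hfpos : ∀ e ∈ E i, 0 < (V i / S e) * B e := fun e he =>
      mul_pos (div_pos (hV i) (hSpos i e he)) (hB e)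
    have hb : bstar i = (E i).inf' (hE i) (fun e => (V i / S e) * B e) := hbstar i
    have hbpos : 0 < bstar i := by
      rw [hb]
      obtain ⟨e, he, heq⟩ := Finset.exists_mem_eq_inf' (hE i)
        (fun e => (V i / S e) * B e)
      rw [heq]; exact hfpos e he
    have hval : ∀ e ∈ E i, V i / ((V i / S e) * B e) = S e / B e := by
      intro e he
      rw [div_mul_eq_mul_div, div_div_eq_mul_div, mul_comm (V i), mul_div_assoc,
        div_mul_cancel_left₀ (hV i).ne', div_eq_mul_inv]
    apply le_antisymm
    · obtain ⟨e, he, heq⟩ := Finset.exists_mem_eq_inf' (hE i)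
        (fun e => (V i / S e) * B e)
      rw [hb, heq, hval e he]
      exact Finset.le_sup' (fun e => S e / B e) he
    · rw [Finset.sup'_le_iff]
      intro e he
      rw [← hval e he]
      apply div_le_div_of_nonneg_left (hV i).le hbpos
      rw [hb]
      exact Finset.inf'_le _ he
  refine ⟨key, ?_⟩
  rw [Finset.sup'_biUnion (f := fun e => S e / B e) Finset.univ_nonempty hE]
  exact Finset.sup'_congr _ rfl (fun i _ => key i)
end

section
/- The substitution q i = T · b i, p i e = x i e · q i maps feasible solutions of CoS-Relax with CCT at most T to feasible solutions of CoS-Relax-Cvx with objective value T: suppose x : ι → ε → ℝ and b : ι → ℝ satisfy the CoS-Relax constraints, and T > 0 satisfies V i ≤ T · b i for every flow i. Define q i = T · b i and p i e = x i e · q i. Then (i) q i ≥ V i for every i; (ii) for every flow i, ∑_{e with tail e = s i} p i e − ∑_{e with head e = s i} p i e = q i, and ∑_{e with head e = d i} p i e − ∑_{e with tail e = d i} p i e = q i, and for every vertex u with u ≠ s i and u ≠ d i, ∑_{e with head e = u} p i e − ∑_{e with tail e = u} p i e = 0; and (iii) for every link e, ∑_i |p i e| ≤ T · B e. -/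
/-- The substitution `q i = T · b i`, `p i e = x i e · q i` maps feasible
solutions of CoS-Relax with CCT at most `T` to feasible solutions of
CoS-Relax-Cvx with objective value `T`. -/
theorem cos_relax_to_cos_relax_cvx
    {𝒱 ε ι : Type*} [Fintype 𝒱] [DecidableEq 𝒱] [Fintype ε] [Fintype ι]
    (tail head : ε → 𝒱) (B : ε → ℝ) (hB : ∀ e, 0 ≤ B e)
    (s d : ι → 𝒱) (V : ι → ℝ) (hV : ∀ i, 0 ≤ V i)
    (x : ι → ε → ℝ) (b : ι → ℝ)
    (hx : ∀ i e, -1 ≤ x i e ∧ x i e ≤ 1)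
    (hb : ∀ i, 0 ≤ b i)
    (hsrc : ∀ i,
      (∑ e ∈ Finset.univ.filter (fun e => tail e = s i), x i e) -
        (∑ e ∈ Finset.univ.filter (fun e => head e = s i), x i e) = 1)
    (hdst : ∀ i,
      (∑ e ∈ Finset.univ.filter (fun e => head e = d i), x i e) -
        (∑ e ∈ Finset.univ.filter (fun e => tail e = d i), x i e) = 1)
    (hcons : ∀ i, ∀ u, u ≠ s i → u ≠ d i →
      (∑ e ∈ Finset.univ.filter (fun e => head e = u), x i e) -
        (∑ e ∈ Finset.univ.filter (fun e => tail e = u), x i e) = 0)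
    (hbw : ∀ e, (∑ i, |x i e| * b i) ≤ B e)
    (T : ℝ) (hT : 0 < T) (hcct : ∀ i, V i ≤ T * b i)
    (q : ι → ℝ) (hq : ∀ i, q i = T * b i)
    (p : ι → ε → ℝ) (hp : ∀ i e, p i e = x i e * q i) :
    (∀ i, V i ≤ q i) ∧
      (∀ i,
        (∑ e ∈ Finset.univ.filter (fun e => tail e = s i), p i e) -
          (∑ e ∈ Finset.univ.filter (fun e => head e = s i), p i e) = q i ∧
        (∑ e ∈ Finset.univ.filter (fun e => head e = d i), p i e) -
          (∑ e ∈ Finset.univ.filter (fun e => tail e = d i), p i e) = q i ∧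
        ∀ u, u ≠ s i → u ≠ d i →
          (∑ e ∈ Finset.univ.filter (fun e => head e = u), p i e) -
            (∑ e ∈ Finset.univ.filter (fun e => tail e = u), p i e) = 0) ∧
      (∀ e, (∑ i, |p i e|) ≤ T * B e) := by
  have hsum : ∀ i (S : Finset ε), (∑ e ∈ S, p i e) = (∑ e ∈ S, x i e) * q i := by
    intro i S
    rw [Finset.sum_mul]
    exact Finset.sum_congr rfl fun e _ => hp i e
  refine ⟨fun i => (hq i) ▸ hcct i, fun i => ?_, fun e => ?_⟩
  · refine ⟨?_, ?_, fun u hu1 hu2 => ?_⟩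
    · rw [hsum, hsum, ← sub_mul, hsrc i, one_mul]
    · rw [hsum, hsum, ← sub_mul, hdst i, one_mul]
    · rw [hsum, hsum, ← sub_mul, hcons i u hu1 hu2, zero_mul]
  · have : (∑ i, |p i e|) = T * ∑ i, |x i e| * b i := by
      rw [Finset.mul_sum]
      refine Finset.sum_congr rfl fun i _ => ?_
      rw [hp, hq, abs_mul, abs_of_nonneg (mul_nonneg hT.le (hb i))]
      ring
    rw [this]
    exact mul_le_mul_of_nonneg_left (hbw e) hT.le
end
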